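/- Let L be a real-linear functional on the real vector space of N×N Hermitian matrices. Then L vanishes on every element of I_Anti if and only if L vanishes on every element of V_Anti. -/
import Mathlib


open Matrix

/-- The permutation matrix `P_π` on the `m`-fold tensor power of `ℂ^n`, indexing
coordinates by functions `f : Fin m → Fin n`, with entries
`(P_π)_{f,g} = 1` if `g = f ∘ π⁻¹` and `0` otherwise. -/
def permMat (n m : ℕ) (π : Equiv.Perm (Fin m)) :
    Matrix (Fin m → Fin n) (Fin m → Fin n) ℂ :=
  Matrix.of fun f g => if g = f ∘ π.symm then 1 else 0

/-- The antisymmetriser `Π_Anti = (1/m!) Σ_π sign(π) • P_π`. -/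
noncomputable def antisymmetriser (n m : ℕ) :
    Matrix (Fin m → Fin n) (Fin m → Fin n) ℂ :=
  (m.factorial : ℂ)⁻¹ •
    ∑ π : Equiv.Perm (Fin m), ((Equiv.Perm.sign π : ℤ) : ℂ) • permMat n m π

/-- The antisymmetrically permuted matrix
`A_{l,r}(G) = sign(π_l)·sign(π_r)·(1/2)(P_l† G P_r + P_r† G P_l)`. -/
noncomputable def antiPerm (n m : ℕ) (πl πr : Equiv.Perm (Fin m))
    (G : Matrix (Fin m → Fin n) (Fin m → Fin n) ℂ) :
    Matrix (Fin m → Fin n) (Fin m → Fin n) ℂ :=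
  (((Equiv.Perm.sign πl : ℤ) : ℂ) * ((Equiv.Perm.sign πr : ℤ) : ℂ)) •
    ((2 : ℂ)⁻¹ •
      ((permMat n m πl)ᴴ * G * permMat n m πr + (permMat n m πr)ᴴ * G * permMat n m πl))

/-- `I_Anti`: the set of matrices of the form `G - A_{l,r}(G)` with `G` Hermitian. -/
def IAnti (n m : ℕ) : Set (Matrix (Fin m → Fin n) (Fin m → Fin n) ℂ) :=
  {A | ∃ (G : Matrix (Fin m → Fin n) (Fin m → Fin n) ℂ) (πl πr : Equiv.Perm (Fin m)),
      G.IsHermitian ∧ A = G - antiPerm n m πl πr G}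

/-- `V_Anti`: the set of matrices of the form `G - Π_Anti G Π_Anti` with `G` Hermitian. -/
def VAnti (n m : ℕ) : Set (Matrix (Fin m → Fin n) (Fin m → Fin n) ℂ) :=
  {A | ∃ G : Matrix (Fin m → Fin n) (Fin m → Fin n) ℂ,
      G.IsHermitian ∧ A = G - antisymmetriser n m * G * antisymmetriser n m}


lemma comp_perm_iff {n m : ℕ} (π : Equiv.Perm (Fin m)) (f g : Fin m → Fin n) :
    f = g ∘ ⇑π.symm ↔ g = f ∘ ⇑π := by
  constructor
  · intro h; funext x; simp [h, Function.comp]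
  · intro h; funext x; simp [h, Function.comp]

lemma permMat_conjTranspose (n m : ℕ) (π : Equiv.Perm (Fin m)) :
    (permMat n m π)ᴴ = permMat n m π⁻¹ := by
  ext f g
  simp only [conjTranspose_apply, permMat, of_apply, Equiv.Perm.inv_def, Equiv.symm_symm,
    apply_ite star, star_one, star_zero]
  exact if_congr (comp_perm_iff π f g) rfl rfl

lemma permMat_mul (n m : ℕ) (π σ : Equiv.Perm (Fin m)) :
    permMat n m π * permMat n m σ = permMat n m (σ * π) := by
  ext f h
  simp only [mul_apply, permMat, of_apply]
  rw [Finset.sum_eq_single (f ∘ ⇑π.symm)]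
  · rw [if_pos rfl, one_mul]
    apply if_congr _ rfl rfl
    constructor <;> intro hh <;> funext x <;> simp [hh, Function.comp, Equiv.Perm.mul_def]
  · exact fun b _ hb => by rw [if_neg hb, zero_mul]
  · simp

lemma signC_mul_self {m : ℕ} (σ : Equiv.Perm (Fin m)) :
    ((Equiv.Perm.sign σ : ℤ) : ℂ) * ((Equiv.Perm.sign σ : ℤ) : ℂ) = 1 := by
  rcases Int.units_eq_one_or (Equiv.Perm.sign σ) with h | h <;> rw [h] <;> norm_num

noncomputable def Ssum (n m : ℕ) : Matrix (Fin m → Fin n) (Fin m → Fin n) ℂ :=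
  ∑ π : Equiv.Perm (Fin m), ((Equiv.Perm.sign π : ℤ) : ℂ) • permMat n m π

lemma Ssum_def (n m : ℕ) : Ssum n m =
    ∑ π : Equiv.Perm (Fin m), ((Equiv.Perm.sign π : ℤ) : ℂ) • permMat n m π := rfl

lemma Ssum_conjTranspose (n m : ℕ) : (Ssum n m)ᴴ = Ssum n m := by
  unfold Ssum
  rw [conjTranspose_sum]
  refine Fintype.sum_equiv (Equiv.inv (Equiv.Perm (Fin m))) _ _ fun π => ?_
  simp [conjTranspose_smul, permMat_conjTranspose]

lemma Ssum_mul_perm (n m : ℕ) (σ : Equiv.Perm (Fin m)) :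
    Ssum n m * permMat n m σ = ((Equiv.Perm.sign σ : ℤ) : ℂ) • Ssum n m := by
  unfold Ssum
  rw [Finset.sum_mul, Finset.smul_sum]
  refine Fintype.sum_equiv (Equiv.mulLeft σ) _ _ fun π => ?_
  rw [smul_mul_assoc, permMat_mul]
  simp only [Equiv.coe_mulLeft, smul_smul]
  congr 1
  rw [Equiv.Perm.sign_mul]
  push_cast
  ring_nf
  rw [sq, signC_mul_self, one_mul]

lemma perm_mul_Ssum (n m : ℕ) (σ : Equiv.Perm (Fin m)) :
    permMat n m σ * Ssum n m = ((Equiv.Perm.sign σ : ℤ) : ℂ) • Ssum n m := by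
  unfold Ssum
  rw [Finset.mul_sum, Finset.smul_sum]
  refine Fintype.sum_equiv (Equiv.mulRight σ) _ _ fun π => ?_
  rw [mul_smul_comm, permMat_mul]
  simp only [Equiv.coe_mulRight, smul_smul]
  congr 1
  rw [Equiv.Perm.sign_mul]
  push_cast
  ring_nf
  rw [sq, signC_mul_self, one_mul]

lemma antisymmetriser_eq (n m : ℕ) :
    antisymmetriser n m = (m.factorial : ℂ)⁻¹ • Ssum n m := rfl

lemma anti_conjTranspose (n m : ℕ) : (antisymmetriser n m)ᴴ = antisymmetriser n m := by
  rw [antisymmetriser_eq, conjTranspose_smul, Ssum_conjTranspose]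
  congr 1
  simp [star_inv₀]

lemma anti_mul_perm (n m : ℕ) (σ : Equiv.Perm (Fin m)) :
    antisymmetriser n m * permMat n m σ
      = ((Equiv.Perm.sign σ : ℤ) : ℂ) • antisymmetriser n m := by
  rw [antisymmetriser_eq, smul_mul_assoc, Ssum_mul_perm, smul_comm]

lemma perm_mul_anti (n m : ℕ) (σ : Equiv.Perm (Fin m)) :
    permMat n m σ * antisymmetriser n m
      = ((Equiv.Perm.sign σ : ℤ) : ℂ) • antisymmetriser n m := by
  rw [antisymmetriser_eq, mul_smul_comm, perm_mul_Ssum, smul_comm]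

lemma double_sum_aux (n m : ℕ) (G : Matrix (Fin m → Fin n) (Fin m → Fin n) ℂ) :
    ∑ l : Equiv.Perm (Fin m), ∑ r : Equiv.Perm (Fin m),
      (((Equiv.Perm.sign l : ℤ) : ℂ) * ((Equiv.Perm.sign r : ℤ) : ℂ)) •
        (permMat n m l * G * permMat n m r)
      = Ssum n m * G * Ssum n m := by
  conv_rhs => rw [Ssum_def, Finset.sum_mul, Finset.sum_mul]
  refine Finset.sum_congr rfl fun l _ => ?_
  rw [smul_mul_assoc, smul_mul_assoc, Finset.mul_sum, Finset.smul_sum]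
  refine Finset.sum_congr rfl fun r _ => ?_
  rw [mul_smul_comm, smul_smul]

lemma double_sum_dag (n m : ℕ) (G : Matrix (Fin m → Fin n) (Fin m → Fin n) ℂ) :
    ∑ l : Equiv.Perm (Fin m), ∑ r : Equiv.Perm (Fin m),
      (((Equiv.Perm.sign l : ℤ) : ℂ) * ((Equiv.Perm.sign r : ℤ) : ℂ)) •
        ((permMat n m l)ᴴ * G * permMat n m r)
      = Ssum n m * G * Ssum n m := by
  rw [← double_sum_aux n m G]
  refine Fintype.sum_equiv (Equiv.inv (Equiv.Perm (Fin m))) _ _ fun l => ?_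
  refine Finset.sum_congr rfl fun r _ => ?_
  rw [permMat_conjTranspose]
  simp [Equiv.Perm.sign_inv]

lemma sum_antiPerm (n m : ℕ) (G : Matrix (Fin m → Fin n) (Fin m → Fin n) ℂ) :
    ∑ l : Equiv.Perm (Fin m), ∑ r : Equiv.Perm (Fin m), antiPerm n m l r G
      = Ssum n m * G * Ssum n m := by
  have h1 := double_sum_dag n m G
  have h2 : ∑ l : Equiv.Perm (Fin m), ∑ r : Equiv.Perm (Fin m),
      (((Equiv.Perm.sign l : ℤ) : ℂ) * ((Equiv.Perm.sign r : ℤ) : ℂ)) •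
        ((permMat n m r)ᴴ * G * permMat n m l)
      = Ssum n m * G * Ssum n m := by
    rw [Finset.sum_comm]
    rw [← h1]
    exact Finset.sum_congr rfl fun l _ => Finset.sum_congr rfl fun r _ => by rw [mul_comm]
  calc ∑ l : Equiv.Perm (Fin m), ∑ r : Equiv.Perm (Fin m), antiPerm n m l r G
      = (2:ℂ)⁻¹ • (∑ l : Equiv.Perm (Fin m), ∑ r : Equiv.Perm (Fin m),
          ((((Equiv.Perm.sign l : ℤ) : ℂ) * ((Equiv.Perm.sign r : ℤ) : ℂ)) •
            ((permMat n m l)ᴴ * G * permMat n m r)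
          + (((Equiv.Perm.sign l : ℤ) : ℂ) * ((Equiv.Perm.sign r : ℤ) : ℂ)) •
            ((permMat n m r)ᴴ * G * permMat n m l))) := by
        rw [Finset.smul_sum]
        refine Finset.sum_congr rfl fun l _ => ?_
        rw [Finset.smul_sum]
        refine Finset.sum_congr rfl fun r _ => ?_
        rw [antiPerm]
        simp only [smul_smul, smul_add]
        ring_nf
    _ = Ssum n m * G * Ssum n m := by
        rw [Finset.sum_congr rfl fun l _ => Finset.sum_add_distrib,
          Finset.sum_add_distrib, h1, h2, smul_add]
        rw [← add_smul]
        norm_num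

lemma antiPerm_isHermitian {n m : ℕ} (l r : Equiv.Perm (Fin m))
    {G : Matrix (Fin m → Fin n) (Fin m → Fin n) ℂ} (hG : G.IsHermitian) :
    (antiPerm n m l r G).IsHermitian := by
  have : ∀ (a b : Equiv.Perm (Fin m)),
      ((permMat n m a)ᴴ * G * permMat n m b)ᴴ = (permMat n m b)ᴴ * G * permMat n m a := by
    intro a b
    rw [conjTranspose_mul, conjTranspose_mul, conjTranspose_conjTranspose, hG.eq,
      Matrix.mul_assoc]
  show _ = _
  rw [antiPerm, conjTranspose_smul, conjTranspose_smul, conjTranspose_add, this, this,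
    add_comm]
  congr 1
  · simp [RCLike.star_def, ← Complex.ofReal_intCast]
  · congr 1
    simp [star_inv₀]

lemma piGpi_isHermitian {n m : ℕ}
    {G : Matrix (Fin m → Fin n) (Fin m → Fin n) ℂ} (hG : G.IsHermitian) :
    (antisymmetriser n m * G * antisymmetriser n m).IsHermitian := by
  show _ = _
  rw [conjTranspose_mul, conjTranspose_mul, anti_conjTranspose, hG.eq, Matrix.mul_assoc]

lemma anti_sandwich {n m : ℕ} (a b : Equiv.Perm (Fin m))
    (G : Matrix (Fin m → Fin n) (Fin m → Fin n) ℂ) :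
    antisymmetriser n m * (permMat n m a * G * permMat n m b) * antisymmetriser n m
      = (((Equiv.Perm.sign a : ℤ) : ℂ) * ((Equiv.Perm.sign b : ℤ) : ℂ)) •
        (antisymmetriser n m * G * antisymmetriser n m) := by
  have h1 : antisymmetriser n m * (permMat n m a * G * permMat n m b) * antisymmetriser n m
      = (antisymmetriser n m * permMat n m a) * G * (permMat n m b * antisymmetriser n m) := by
    simp only [Matrix.mul_assoc]
  rw [h1, anti_mul_perm, perm_mul_anti, smul_mul_assoc, smul_mul_assoc, mul_smul_comm,
    smul_smul]

lemma anti_mul_antiPerm {n m : ℕ} (l r : Equiv.Perm (Fin m))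
    (G : Matrix (Fin m → Fin n) (Fin m → Fin n) ℂ) :
    antisymmetriser n m * antiPerm n m l r G * antisymmetriser n m
      = antisymmetriser n m * G * antisymmetriser n m := by
  set a : ℂ := ((Equiv.Perm.sign l : ℤ) : ℂ) with ha
  set b : ℂ := ((Equiv.Perm.sign r : ℤ) : ℂ) with hb
  have haa : a * a = 1 := signC_mul_self l
  have hbb : b * b = 1 := signC_mul_self r
  rw [antiPerm, mul_smul_comm, mul_smul_comm, smul_mul_assoc, smul_mul_assoc,
    Matrix.mul_add, Matrix.add_mul,
    permMat_conjTranspose, permMat_conjTranspose, anti_sandwich, anti_sandwich]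
  simp only [Equiv.Perm.sign_inv, ← ha, ← hb, smul_smul, ← add_smul]
  rw [show a * b * ((2:ℂ)⁻¹ * (a * b + b * a)) = 1 by
    linear_combination b * b * haa + hbb]
  exact one_smul _ _

/-- A real-linear functional on the real vector space of Hermitian matrices vanishes on
every element of `I_Anti` iff it vanishes on every element of `V_Anti`. -/
theorem vanishes_on_IAnti_iff_vanishes_on_VAnti (n m : ℕ) (hn : 1 ≤ n) (hm : 1 ≤ m)
    (L : selfAdjoint (Matrix (Fin m → Fin n) (Fin m → Fin n) ℂ) →ₗ[ℝ] ℝ) :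
    (∀ A : selfAdjoint (Matrix (Fin m → Fin n) (Fin m → Fin n) ℂ),
        (A : Matrix (Fin m → Fin n) (Fin m → Fin n) ℂ) ∈ IAnti n m → L A = 0) ↔
      (∀ A : selfAdjoint (Matrix (Fin m → Fin n) (Fin m → Fin n) ℂ),
        (A : Matrix (Fin m → Fin n) (Fin m → Fin n) ℂ) ∈ VAnti n m → L A = 0) := by
  have hfac : (m.factorial : ℂ) ≠ 0 := Nat.cast_ne_zero.mpr (Nat.factorial_ne_zero m)
  have hsmulRC : ∀ (r : ℝ) (M : Matrix (Fin m → Fin n) (Fin m → Fin n) ℂ),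
      r • M = ((r : ℂ)) • M := fun r M => (algebraMap_smul ℂ r M).symm
  constructor
  · intro h A hA
    obtain ⟨G, hG, hAeq⟩ := hA
    have memB : ∀ p : Equiv.Perm (Fin m) × Equiv.Perm (Fin m),
        (G - antiPerm n m p.1 p.2 G) ∈
          selfAdjoint (Matrix (Fin m → Fin n) (Fin m → Fin n) ℂ) := fun p => by
      rw [selfAdjoint.mem_iff, Matrix.star_eq_conjTranspose]
      exact hG.sub (antiPerm_isHermitian p.1 p.2 hG)
    set B : Equiv.Perm (Fin m) × Equiv.Perm (Fin m) →
        selfAdjoint (Matrix (Fin m → Fin n) (Fin m → Fin n) ℂ) :=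
      fun p => ⟨G - antiPerm n m p.1 p.2 G, memB p⟩ with hB
    have hLB : ∀ p, L (B p) = 0 := fun p => h (B p) ⟨G, p.1, p.2, hG, rfl⟩
    have hC : ((m.factorial : ℂ) * (m.factorial : ℂ)) •
        (G - antisymmetriser n m * G * antisymmetriser n m)
        = ∑ p : Equiv.Perm (Fin m) × Equiv.Perm (Fin m), (G - antiPerm n m p.1 p.2 G) := by
      have hconst : ∑ _l : Equiv.Perm (Fin m), ∑ _r : Equiv.Perm (Fin m), G
          = ((m.factorial : ℂ) * (m.factorial : ℂ)) • G := by
        simp only [Finset.sum_const, Finset.card_univ, Fintype.card_perm, Fintype.card_fin]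
        rw [← Nat.cast_smul_eq_nsmul ℂ, ← Nat.cast_smul_eq_nsmul ℂ, smul_smul]
      have hPi : ((m.factorial : ℂ) * (m.factorial : ℂ)) •
          (antisymmetriser n m * G * antisymmetriser n m) = Ssum n m * G * Ssum n m := by
        rw [antisymmetriser_eq, smul_mul_assoc, smul_mul_assoc, Matrix.mul_smul,
          smul_smul, smul_smul]
        rw [show (m.factorial : ℂ) * (m.factorial : ℂ) *
            (m.factorial : ℂ)⁻¹ * (m.factorial : ℂ)⁻¹ = 1 by field_simp, one_smul]
      rw [Fintype.sum_prod_type]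
      simp only [Finset.sum_sub_distrib]
      rw [hconst, sum_antiPerm, smul_sub, hPi]
    have hsub : ((m.factorial : ℝ) * (m.factorial : ℝ)) • A
        = ∑ p : Equiv.Perm (Fin m) × Equiv.Perm (Fin m), B p := by
      apply Subtype.ext
      rw [AddSubmonoidClass.coe_finset_sum, selfAdjoint.val_smul, hAeq, hsmulRC]
      push_cast
      exact hC
    have hLA := congrArg L hsub
    rw [_root_.map_smul, map_sum] at hLA
    simp only [hLB, Finset.sum_const_zero, smul_eq_mul] at hLA
    have hfr : ((m.factorial : ℝ) * (m.factorial : ℝ)) ≠ 0 := by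
      have := Nat.factorial_pos m
      positivity
    exact (mul_eq_zero.mp hLA).resolve_left hfr
  · intro h A hA
    obtain ⟨G, l, r, hG, hAeq⟩ := hA
    have hA'h : (antiPerm n m l r G).IsHermitian := antiPerm_isHermitian l r hG
    set X : selfAdjoint (Matrix (Fin m → Fin n) (Fin m → Fin n) ℂ) :=
      ⟨G - antisymmetriser n m * G * antisymmetriser n m, by
        rw [selfAdjoint.mem_iff, Matrix.star_eq_conjTranspose]
        exact hG.sub (piGpi_isHermitian hG)⟩ with hX
    set Y : selfAdjoint (Matrix (Fin m → Fin n) (Fin m → Fin n) ℂ) :=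
      ⟨antiPerm n m l r G -
          antisymmetriser n m * antiPerm n m l r G * antisymmetriser n m, by
        rw [selfAdjoint.mem_iff, Matrix.star_eq_conjTranspose]
        exact hA'h.sub (piGpi_isHermitian hA'h)⟩ with hY
    have hAXY : A = X - Y := by
      apply Subtype.ext
      rw [AddSubgroup.coe_sub]
      show (A : Matrix (Fin m → Fin n) (Fin m → Fin n) ℂ) =
        (G - antisymmetriser n m * G * antisymmetriser n m) -
          (antiPerm n m l r G -
            antisymmetriser n m * antiPerm n m l r G * antisymmetriser n m)
      rw [hAeq, anti_mul_antiPerm]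
      abel
    rw [hAXY, map_sub, h X ⟨G, hG, rfl⟩, h Y ⟨antiPerm n m l r G, hA'h, rfl⟩, sub_zero]
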